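/- Every finitely generated subgroup Γ of GL(n, ℂ) is residually finite; equivalently, the intersection of all finite-index normal subgroups of Γ is trivial. -/

import Mathlib

/-!
The entries of the generators of `Γ` and of their inverses generate a finitely generated
subring `A ⊆ ℂ`, and `Γ` embeds in `GL n A`. Given `g ≠ 1`, some entry `a` of `g - 1` is
nonzero. Since `A` is a reduced Jacobson ring, its nonzero elements avoid some maximal ideal
`m`, and by the Nullstellensatz the residue field `A ⧸ m` is finite. Reduction modulo `m` is then
a homomorphism to the finite group `GL n (A ⧸ m)` that does not kill `g`.
-/

instance Int.isJacobsonRing : IsJacobsonRing ℤ := by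
  rw [isJacobsonRing_iff_prime_eq]
  intro P hP
  rcases eq_or_ne P ⊥ with rfl | hP0
  · refine le_antisymm (fun x hx => ?_) Ideal.le_jacobson
    rw [Ideal.mem_jacobson_bot] at hx
    have h₁ := Int.isUnit_iff.mp (hx 1)
    have h₂ := Int.isUnit_iff.mp (hx (-1))
    rw [Ideal.mem_bot]
    omega
  · have := hP.isMaximal hP0
    exact Ideal.jacobson_eq_self_of_isMaximal

theorem finite_of_module_finite_int (K : Type*) [Field K] [Module.Finite ℤ K] : Finite K := by
  obtain ⟨p, hp⟩ := CharP.exists K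
  rcases CharP.char_is_prime_or_zero K p with hprime | rfl
  · have : AddGroup.FG K := Module.Finite.iff_addGroup_fg.mp ‹_›
    refine AddCommGroup.finite_of_fg_isAddTorsion K fun x => ?_
    refine isOfFinAddOrder_iff_nsmul_eq_zero.mpr ⟨p, hprime.pos, ?_⟩
    rw [nsmul_eq_mul, CharP.cast_eq_zero K p, zero_mul]
  · have : CharZero K := CharP.charP_to_charZero K
    -- `ℤ → K` would be an injective integral extension of `ℤ` by a field.
    exact absurd (isField_of_isIntegral_of_isField (FaithfulSMul.algebraMap_injective ℤ K)
      (Field.toIsField K)) Int.not_isField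

theorem Ideal.exists_isMaximal_notMem_of_ne_zero {R : Type*} [CommRing R] [IsJacobsonRing R]
    [IsReduced R] {a : R} (ha : a ≠ 0) : ∃ m : Ideal R, m.IsMaximal ∧ a ∉ m := by
  by_contra! h
  have hjac : (⊥ : Ideal R).jacobson = ⊥ := IsJacobsonRing.out' ⊥ Ideal.isRadical_bot
  have : a ∈ (⊥ : Ideal R).jacobson := Ideal.mem_sInf.mpr fun {m} hm => h m hm.2
  exact ha (by rwa [hjac, Ideal.mem_bot] at this)

theorem Ideal.finite_quotient_of_finiteType_int {R : Type*} [CommRing R] [Algebra.FiniteType ℤ R]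
    (m : Ideal R) [m.IsMaximal] : Finite (R ⧸ m) := by
  let := Ideal.Quotient.field m
  have : Algebra.FiniteType ℤ (R ⧸ m) :=
    .of_surjective (Ideal.Quotient.mkₐ ℤ m) (Ideal.Quotient.mkₐ_surjective ℤ m)
  have := finite_of_finite_type_of_isJacobsonRing ℤ (R ⧸ m)
  exact finite_of_module_finite_int (R ⧸ m)

theorem Group.ResiduallyFinite.of_injective {G H : Type*} [Group G] [Group H]
    [ResiduallyFinite H] {f : G →* H} (hf : Function.Injective f) : ResiduallyFinite G := by
  rw [residuallyFinite_iff_forall_finiteIndexNormalSubgroup]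
  intro g hg
  exact hf <| (eq_one_iff_forall_finiteIndexNormalSubroup (f g) fun K => hg (K.comap f)).trans
    f.map_one.symm

namespace Matrix.GeneralLinearGroup

variable {n : Type*} [Fintype n] [DecidableEq n] {R : Type*} [CommRing R]

theorem map_injective {S : Type*} [CommRing S] {f : R →+* S} (hf : Function.Injective f) :
    Function.Injective (map (n := n) f) := fun _ _ h =>
  Units.ext <| Matrix.map_injective hf <| congrArg Units.val h

theorem mem_range_map_subalgebra_val (A : Subalgebra ℤ R) {g : GL n R}
    (hg : ∀ i j, g i j ∈ A) (hg' : ∀ i j, g⁻¹ i j ∈ A) : g ∈ (map (A.val : A →+* R)).range := by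
  let M : Matrix n n A := of fun i j => ⟨g i j, hg i j⟩
  let M' : Matrix n n A := of fun i j => ⟨g⁻¹ i j, hg' i j⟩
  have hinj : Function.Injective (RingHom.mapMatrix (m := n) (A.val : A →+* R)) :=
    Matrix.map_injective Subtype.val_injective
  refine ⟨⟨M, M', hinj ?_, hinj ?_⟩, Units.ext rfl⟩
  · rw [map_mul, map_one]
    exact g.mul_inv
  · rw [map_mul, map_one]
    exact g.inv_mul

theorem residuallyFinite_of_finiteType [Algebra.FiniteType ℤ R] [IsReduced R] :
    Group.ResiduallyFinite (GL n R) := by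
  refine Group.residuallyFinite_of_forall_exists_finite_monoidHom fun g hg => ?_
  obtain ⟨i, j, hij⟩ : ∃ i j, g i j ≠ (1 : GL n R) i j := by
    by_contra! h
    exact hg (Units.ext (Matrix.ext h))
  have := isJacobsonRing_of_finiteType (A := ℤ) (B := R)
  obtain ⟨m, hm, hgm⟩ := Ideal.exists_isMaximal_notMem_of_ne_zero (sub_ne_zero.mpr hij)
  have := Ideal.finite_quotient_of_finiteType_int m
  refine ⟨GL n (R ⧸ m), inferInstance, inferInstance, map (Ideal.Quotient.mk m), fun h => hgm ?_⟩
  have h' : map (Ideal.Quotient.mk m) g = map (Ideal.Quotient.mk m) 1 := h.trans (map_one _).symm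
  rw [← Ideal.Quotient.eq]
  simpa only [GeneralLinearGroup.map_apply] using congrArg (fun x : GL n (R ⧸ m) => x i j) h'

theorem exists_fg_subalgebra_range_le {G : Type*} [Group G] (hG : Group.FG G) (ρ : G →* GL n R) :
    ∃ A : Subalgebra ℤ R, A.FG ∧ ρ.range ≤ (map (A.val : A →+* R)).range := by
  obtain ⟨S, hS, hSfin⟩ := Group.fg_iff.mp hG
  let T : Set R := ⋃ s ∈ S, (Set.range fun p : n × n => ρ s p.1 p.2) ∪
    Set.range fun p : n × n => (ρ s)⁻¹ p.1 p.2
  have hT : T.Finite := hSfin.biUnion fun _ _ => (Set.finite_range _).union (Set.finite_range _)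
  refine ⟨Algebra.adjoin ℤ T, Subalgebra.fg_def.mpr ⟨T, hT, rfl⟩, ?_⟩
  rw [MonoidHom.range_eq_map, ← hS, MonoidHom.map_closure, Subgroup.closure_le]
  rintro _ ⟨s, hs, rfl⟩
  exact mem_range_map_subalgebra_val _
    (fun i j => Algebra.subset_adjoin <| Set.mem_biUnion hs <| .inl ⟨(i, j), rfl⟩)
    (fun i j => Algebra.subset_adjoin <| Set.mem_biUnion hs <| .inr ⟨(i, j), rfl⟩)

theorem residuallyFinite_of_injective [IsReduced R] {G : Type*} [Group G] (hG : Group.FG G)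
    {ρ : G →* GL n R} (hρ : Function.Injective ρ) : Group.ResiduallyFinite G := by
  obtain ⟨A, hA, hρA⟩ := exists_fg_subalgebra_range_le hG ρ
  have : Algebra.FiniteType ℤ A := (Subalgebra.fg_iff_finiteType A).mp hA
  have : IsReduced A := isReduced_of_injective A.val Subtype.val_injective
  have : Group.ResiduallyFinite (GL n A) := residuallyFinite_of_finiteType
  let e : GL n A ≃* (map (A.val : A →+* R)).range :=
    MonoidHom.ofInjective (map_injective Subtype.val_injective)
  let lift : G →* GL n A := e.symm.toMonoidHom.comp (ρ.codRestrict _ fun g => hρA ⟨g, rfl⟩)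
  have hlift (g : G) : map (A.val : A →+* R) (lift g) = ρ g :=
    congrArg Subtype.val (e.apply_symm_apply _)
  exact .of_injective (f := lift) fun a b h => hρ <| by rw [← hlift, ← hlift, h]

end Matrix.GeneralLinearGroup

/-- **Malcev's theorem.** Every finitely generated subgroup `Γ` of `GL(n, ℂ)`
(presented here as a finitely generated group with a faithful representation
into `GL(n, ℂ)`) is residually finite; equivalently, the intersection of all
finite-index normal subgroups of `Γ` is trivial. -/
theorem malcev_residually_finite
    (Γ : Type) [Group Γ] (hfg : Group.FG Γ) (n : ℕ)
    (ρ : Γ →* Matrix.GeneralLinearGroup (Fin n) ℂ)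
    (hinj : Function.Injective ρ) :
    (∀ g : Γ, g ≠ 1 → ∃ N : Subgroup Γ, N.Normal ∧ N.FiniteIndex ∧ g ∉ N) ∧
    (⨅ (N : Subgroup Γ) (_ : N.Normal) (_ : N.FiniteIndex), N) = ⊥ := by
  have := Matrix.GeneralLinearGroup.residuallyFinite_of_injective hfg hinj
  have separating (g : Γ) (hg : g ≠ 1) :
      ∃ N : Subgroup Γ, N.Normal ∧ N.FiniteIndex ∧ g ∉ N :=
    let ⟨N, hgN⟩ := Group.exists_finiteIndexNormalSubgroup_notMem g hg
    ⟨N, N.isNormal', N.isFiniteIndex', hgN⟩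
  refine ⟨separating, (Subgroup.eq_bot_iff_forall _).mpr fun g hg => ?_⟩
  by_contra hg1
  obtain ⟨N, hN, hNfin, hgN⟩ := separating g hg1
  simp only [Subgroup.mem_iInf] at hg
  exact hgN (hg N hN hNfin)
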